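/- On Minkowski ℝ⁴, let R be a smooth (0,4)-tensor field having Riemann symmetries at every point and satisfying the second Bianchi identity ∂_{[ν} R_{αβ]λμ} = 0 everywhere. Let B be the pointwise Bel tensor of R (built with η), let Ric_{μβ} = η^{αλ} R_{αμλβ} be the Ricci trace of R, and set J_{λμβ} = ∂_λ Ric_{μβ} − ∂_μ Ric_{λβ}. Then at every point ∂_α B^{αβλμ} = R^{β}{}_ρ{}^{λ}{}_σ J^{μσρ} + R^{β}{}_ρ{}^{μ}{}_σ J^{λσρ} − (1/2) η^{λμ} R^{β}{}_{ρσγ} J^{σγρ}. -/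

import Mathlib

noncomputable section

/-- The `ν`-th coordinate vector of ℝ⁴. -/
def coordV (ν : Fin 4) : Fin 4 → ℝ := Pi.single ν 1

/-- The coordinate partial derivative `∂_ν f` at `p`. -/
def pd (ν : Fin 4) (f : (Fin 4 → ℝ) → ℝ) (p : Fin 4 → ℝ) : ℝ :=
  fderiv ℝ f p (coordV ν)

/-- The Minkowski metric `η = diag(1, −1, −1, −1)` on ℝ⁴ (its own inverse,
so it is also used to raise indices). -/
def mink (μ ν : Fin 4) : ℝ := if μ = ν then (if μ = 0 then 1 else -1) else 0

/-- A (0,4)-tensor (components) has the Riemann symmetries: antisymmetry in the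
first pair, antisymmetry in the second pair, symmetry under interchange of the
two pairs, and the first Bianchi identity `R_{α[βλμ]} = 0` (equivalent, given
the other symmetries, to the cyclic identity). -/
def RiemannSym (R : Fin 4 → Fin 4 → Fin 4 → Fin 4 → ℝ) : Prop :=
  (∀ α β lam μ, R α β lam μ = - R β α lam μ) ∧
  (∀ α β lam μ, R α β lam μ = - R α β μ lam) ∧
  (∀ α β lam μ, R α β lam μ = R lam μ α β) ∧
  (∀ α β lam μ, R α β lam μ + R α lam μ β + R α μ β lam = 0)

/-- The second Bianchi identity `∂_{[ν} R_{αβ]λμ} = 0` (antisymmetrization over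
the three indices `ν, α, β`) for a (0,4)-tensor field `R` on Minkowski ℝ⁴. -/
def SecondBianchi (R : (Fin 4 → ℝ) → Fin 4 → Fin 4 → Fin 4 → Fin 4 → ℝ) : Prop :=
  ∀ p ν α β lam μ,
    (1/6 : ℝ) *
      (pd ν (fun q => R q α β lam μ) p + pd α (fun q => R q β ν lam μ) p
        + pd β (fun q => R q ν α lam μ) p - pd ν (fun q => R q β α lam μ) p
        - pd α (fun q => R q ν β lam μ) p - pd β (fun q => R q α ν lam μ) p) = 0

/-- The (pointwise) Bel tensor of a (0,4)-tensor `R`, built with the Minkowski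
metric `η` (which is its own inverse, so indices are raised with `mink`):
`B_{αβλμ} = R_{αρλσ}R_β{}^ρ{}_μ{}^σ + R_{αρμσ}R_β{}^ρ{}_λ{}^σ
 − (1/2) η_{αβ} R_{ρτλσ}R^{ρτ}{}_μ{}^σ − (1/2) η_{λμ} R_{αρστ}R_β{}^{ρστ}
 + (1/8) η_{αβ} η_{λμ} R_{ρτσν}R^{ρτσν}`. -/
def Bel (R : Fin 4 → Fin 4 → Fin 4 → Fin 4 → ℝ) (α β lam μ : Fin 4) : ℝ :=
    (∑ ρ, ∑ σ, ∑ ρ', ∑ σ', R α ρ lam σ * mink ρ ρ' * mink σ σ' * R β ρ' μ σ')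
  + (∑ ρ, ∑ σ, ∑ ρ', ∑ σ', R α ρ μ σ * mink ρ ρ' * mink σ σ' * R β ρ' lam σ')
  - (1/2) * mink α β * (∑ ρ, ∑ τ, ∑ σ, ∑ ρ', ∑ τ', ∑ σ',
      mink ρ ρ' * mink τ τ' * mink σ σ' * R ρ τ lam σ * R ρ' τ' μ σ')
  - (1/2) * mink lam μ * (∑ ρ, ∑ σ, ∑ τ, ∑ ρ', ∑ σ', ∑ τ',
      mink ρ ρ' * mink σ σ' * mink τ τ' * R α ρ σ τ * R β ρ' σ' τ')
  + (1/8) * mink α β * mink lam μ * (∑ ρ, ∑ τ, ∑ σ, ∑ ν, ∑ ρ', ∑ τ', ∑ σ', ∑ ν',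
      mink ρ ρ' * mink τ τ' * mink σ σ' * mink ν ν' * R ρ τ σ ν * R ρ' τ' σ' ν')

/-- The Bel tensor of `R` with all four indices raised with `η`. -/
def belUp (R : (Fin 4 → ℝ) → Fin 4 → Fin 4 → Fin 4 → Fin 4 → ℝ)
    (q : Fin 4 → ℝ) (α β lam μ : Fin 4) : ℝ :=
  ∑ α', ∑ β', ∑ lam', ∑ μ',
    mink α α' * mink β β' * mink lam lam' * mink μ μ' * Bel (R q) α' β' lam' μ'

/-- The divergence `∂_α B^{αβλμ}` of the Bel tensor of `R`. -/
def divBel (R : (Fin 4 → ℝ) → Fin 4 → Fin 4 → Fin 4 → Fin 4 → ℝ)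
    (p : Fin 4 → ℝ) (β lam μ : Fin 4) : ℝ :=
  ∑ α, pd α (fun q => belUp R q α β lam μ) p

/-- The Ricci trace of `R`: `Ric_{μβ} = η^{αλ} R_{αμλβ}`. -/
def ricci (R : (Fin 4 → ℝ) → Fin 4 → Fin 4 → Fin 4 → Fin 4 → ℝ)
    (q : Fin 4 → ℝ) (μ β : Fin 4) : ℝ :=
  ∑ α, ∑ lam, mink α lam * R q α μ lam β

/-- The matter current `J_{λμβ} = ∂_λ Ric_{μβ} − ∂_μ Ric_{λβ}`. -/
def matJ (R : (Fin 4 → ℝ) → Fin 4 → Fin 4 → Fin 4 → Fin 4 → ℝ)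
    (p : Fin 4 → ℝ) (lam μ β : Fin 4) : ℝ :=
  pd lam (fun q => ricci R q μ β) p - pd μ (fun q => ricci R q lam β) p

/-- The matter current with all three indices raised: `J^{μσρ}`. -/
def matJUp (R : (Fin 4 → ℝ) → Fin 4 → Fin 4 → Fin 4 → Fin 4 → ℝ)
    (p : Fin 4 → ℝ) (μ σ ρ : Fin 4) : ℝ :=
  ∑ μ', ∑ σ', ∑ ρ', mink μ μ' * mink σ σ' * mink ρ ρ' * matJ R p μ' σ' ρ'

/-- `R` with its first and third indices raised: `R^β{}_ρ{}^λ{}_σ`. -/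
def rUp13 (R : (Fin 4 → ℝ) → Fin 4 → Fin 4 → Fin 4 → Fin 4 → ℝ)
    (q : Fin 4 → ℝ) (β ρ lam σ : Fin 4) : ℝ :=
  ∑ β', ∑ lam', mink β β' * mink lam lam' * R q β' ρ lam' σ

/-- `R` with its first index raised: `R^β{}_{ρσγ}`. -/
def rUp1 (R : (Fin 4 → ℝ) → Fin 4 → Fin 4 → Fin 4 → Fin 4 → ℝ)
    (q : Fin 4 → ℝ) (β ρ σ γ : Fin 4) : ℝ :=
  ∑ β', mink β β' * R q β' ρ σ γ

def eps (i : Fin 4) : ℝ := if i = 0 then 1 else -1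

lemma mink_eq2 (i j : Fin 4) : mink i j = if i = j then eps i else 0 := rfl

lemma eps_sq (i : Fin 4) : eps i * eps i = 1 := by unfold eps; split <;> norm_num

section pdlem
variable {f g : (Fin 4 → ℝ) → ℝ} {ν : Fin 4} {p : Fin 4 → ℝ}

lemma pd_add (hf : DifferentiableAt ℝ f p) (hg : DifferentiableAt ℝ g p) :
    pd ν (fun q => f q + g q) p = pd ν f p + pd ν g p := by
  unfold pd; rw [fderiv_fun_add hf hg]; rfl

lemma pd_sub (hf : DifferentiableAt ℝ f p) (hg : DifferentiableAt ℝ g p) :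
    pd ν (fun q => f q - g q) p = pd ν f p - pd ν g p := by
  unfold pd; rw [fderiv_fun_sub hf hg]; rfl

lemma pd_neg : pd ν (fun q => -f q) p = - pd ν f p := by
  unfold pd; rw [fderiv_fun_neg]; rfl

lemma pd_mul (hf : DifferentiableAt ℝ f p) (hg : DifferentiableAt ℝ g p) :
    pd ν (fun q => f q * g q) p = pd ν f p * g p + f p * pd ν g p := by
  unfold pd; rw [fderiv_fun_mul hf hg]; simp; ring

lemma pd_const_mul (c : ℝ) (hf : DifferentiableAt ℝ f p) :
    pd ν (fun q => c * f q) p = c * pd ν f p := by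
  unfold pd; rw [fderiv_const_mul hf c]; rfl

lemma pd_sum {ι : Type*} (s : Finset ι) (F : ι → (Fin 4 → ℝ) → ℝ)
    (h : ∀ i ∈ s, DifferentiableAt ℝ (F i) p) :
    pd ν (fun q => ∑ i ∈ s, F i q) p = ∑ i ∈ s, pd ν (F i) p := by
  unfold pd; rw [fderiv_fun_sum h]; simp

lemma pd_congr (h : ∀ q, f q = g q) : pd ν f p = pd ν g p := by
  have : f = g := funext h; rw [this]

end pdlem

section helpers
variable {ν : Fin 4} {p : Fin 4 → ℝ}

lemma diff_sum_cmul1 (c : Fin 4 → ℝ) (A : Fin 4 → (Fin 4 → ℝ) → ℝ)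
    (hA : ∀ i, DifferentiableAt ℝ (A i) p) :
    DifferentiableAt ℝ (fun q => ∑ i, c i * A i q) p :=
  DifferentiableAt.fun_sum fun i _ => (hA i).const_mul (c i)

lemma pd_sum_cmul1 (c : Fin 4 → ℝ) (A : Fin 4 → (Fin 4 → ℝ) → ℝ)
    (hA : ∀ i, DifferentiableAt ℝ (A i) p) :
    pd ν (fun q => ∑ i, c i * A i q) p = ∑ i, c i * pd ν (A i) p := by
  rw [pd_sum Finset.univ _ (fun i _ => (hA i).const_mul (c i))]
  exact Finset.sum_congr rfl fun i _ => pd_const_mul (c i) (hA i)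

lemma diff_sum_mul1 (c : Fin 4 → ℝ) (A B : Fin 4 → (Fin 4 → ℝ) → ℝ)
    (hA : ∀ i, DifferentiableAt ℝ (A i) p) (hB : ∀ i, DifferentiableAt ℝ (B i) p) :
    DifferentiableAt ℝ (fun q => ∑ i, c i * (A i q * B i q)) p :=
  DifferentiableAt.fun_sum fun i _ => ((hA i).mul (hB i)).const_mul (c i)

lemma pd_sum_mul1 (c : Fin 4 → ℝ) (A B : Fin 4 → (Fin 4 → ℝ) → ℝ)
    (hA : ∀ i, DifferentiableAt ℝ (A i) p) (hB : ∀ i, DifferentiableAt ℝ (B i) p) :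
    pd ν (fun q => ∑ i, c i * (A i q * B i q)) p
      = ∑ i, c i * (pd ν (A i) p * B i p + A i p * pd ν (B i) p) := by
  rw [pd_sum Finset.univ _ (fun i _ => ((hA i).fun_mul (hB i)).const_mul (c i))]
  refine Finset.sum_congr rfl fun i _ => ?_
  rw [pd_const_mul (c i) ((hA i).fun_mul (hB i)), pd_mul (hA i) (hB i)]

lemma diff_sum_mul2 (c : Fin 4 → Fin 4 → ℝ) (A B : Fin 4 → Fin 4 → (Fin 4 → ℝ) → ℝ)
    (hA : ∀ i j, DifferentiableAt ℝ (A i j) p) (hB : ∀ i j, DifferentiableAt ℝ (B i j) p) :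
    DifferentiableAt ℝ (fun q => ∑ i, ∑ j, c i j * (A i j q * B i j q)) p :=
  DifferentiableAt.fun_sum fun i _ => diff_sum_mul1 (c i) (A i) (B i) (hA i) (hB i)

lemma pd_sum_mul2 (c : Fin 4 → Fin 4 → ℝ) (A B : Fin 4 → Fin 4 → (Fin 4 → ℝ) → ℝ)
    (hA : ∀ i j, DifferentiableAt ℝ (A i j) p) (hB : ∀ i j, DifferentiableAt ℝ (B i j) p) :
    pd ν (fun q => ∑ i, ∑ j, c i j * (A i j q * B i j q)) p
      = ∑ i, ∑ j, c i j * (pd ν (A i j) p * B i j p + A i j p * pd ν (B i j) p) := by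
  rw [pd_sum Finset.univ _ (fun i _ => diff_sum_mul1 (c i) (A i) (B i) (hA i) (hB i))]
  exact Finset.sum_congr rfl fun i _ => pd_sum_mul1 (c i) (A i) (B i) (hA i) (hB i)

lemma diff_sum_mul3 (c : Fin 4 → Fin 4 → Fin 4 → ℝ)
    (A B : Fin 4 → Fin 4 → Fin 4 → (Fin 4 → ℝ) → ℝ)
    (hA : ∀ i j k, DifferentiableAt ℝ (A i j k) p)
    (hB : ∀ i j k, DifferentiableAt ℝ (B i j k) p) :
    DifferentiableAt ℝ (fun q => ∑ i, ∑ j, ∑ k, c i j k * (A i j k q * B i j k q)) p :=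
  DifferentiableAt.fun_sum fun i _ => diff_sum_mul2 (c i) (A i) (B i) (hA i) (hB i)

lemma pd_sum_mul3 (c : Fin 4 → Fin 4 → Fin 4 → ℝ)
    (A B : Fin 4 → Fin 4 → Fin 4 → (Fin 4 → ℝ) → ℝ)
    (hA : ∀ i j k, DifferentiableAt ℝ (A i j k) p)
    (hB : ∀ i j k, DifferentiableAt ℝ (B i j k) p) :
    pd ν (fun q => ∑ i, ∑ j, ∑ k, c i j k * (A i j k q * B i j k q)) p
      = ∑ i, ∑ j, ∑ k, c i j k *
          (pd ν (A i j k) p * B i j k p + A i j k p * pd ν (B i j k) p) := by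
  rw [pd_sum Finset.univ _ (fun i _ => diff_sum_mul2 (c i) (A i) (B i) (hA i) (hB i))]
  exact Finset.sum_congr rfl fun i _ => pd_sum_mul2 (c i) (A i) (B i) (hA i) (hB i)

lemma diff_sum_mul4 (c : Fin 4 → Fin 4 → Fin 4 → Fin 4 → ℝ)
    (A B : Fin 4 → Fin 4 → Fin 4 → Fin 4 → (Fin 4 → ℝ) → ℝ)
    (hA : ∀ i j k l, DifferentiableAt ℝ (A i j k l) p)
    (hB : ∀ i j k l, DifferentiableAt ℝ (B i j k l) p) :
    DifferentiableAt ℝ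
      (fun q => ∑ i, ∑ j, ∑ k, ∑ l, c i j k l * (A i j k l q * B i j k l q)) p :=
  DifferentiableAt.fun_sum fun i _ => diff_sum_mul3 (c i) (A i) (B i) (hA i) (hB i)

lemma pd_sum_mul4 (c : Fin 4 → Fin 4 → Fin 4 → Fin 4 → ℝ)
    (A B : Fin 4 → Fin 4 → Fin 4 → Fin 4 → (Fin 4 → ℝ) → ℝ)
    (hA : ∀ i j k l, DifferentiableAt ℝ (A i j k l) p)
    (hB : ∀ i j k l, DifferentiableAt ℝ (B i j k l) p) :
    pd ν (fun q => ∑ i, ∑ j, ∑ k, ∑ l, c i j k l * (A i j k l q * B i j k l q)) p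
      = ∑ i, ∑ j, ∑ k, ∑ l, c i j k l *
          (pd ν (A i j k l) p * B i j k l p + A i j k l p * pd ν (B i j k l) p) := by
  rw [pd_sum Finset.univ _ (fun i _ => diff_sum_mul3 (c i) (A i) (B i) (hA i) (hB i))]
  exact Finset.sum_congr rfl fun i _ => pd_sum_mul3 (c i) (A i) (B i) (hA i) (hB i)

end helpers

section belcol
variable (T : Fin 4 → Fin 4 → Fin 4 → Fin 4 → ℝ)

lemma belT1 (a b c d : Fin 4) :
    (∑ ρ, ∑ σ, ∑ ρ', ∑ σ', T a ρ c σ * mink ρ ρ' * mink σ σ' * T b ρ' d σ')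
      = ∑ ρ, ∑ σ, eps ρ * eps σ * (T a ρ c σ * T b ρ d σ) := by
  refine Finset.sum_congr rfl fun ρ _ => Finset.sum_congr rfl fun σ _ => ?_
  simp only [mink_eq2, mul_ite, ite_mul, mul_zero, zero_mul, Finset.sum_ite_eq,
    Finset.mem_univ, if_true]
  ring

lemma belT3 (c d : Fin 4) :
    (∑ ρ, ∑ τ, ∑ σ, ∑ ρ', ∑ τ', ∑ σ',
        mink ρ ρ' * mink τ τ' * mink σ σ' * T ρ τ c σ * T ρ' τ' d σ')
      = ∑ ρ, ∑ τ, ∑ σ, eps ρ * eps τ * eps σ * (T ρ τ c σ * T ρ τ d σ) := by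
  refine Finset.sum_congr rfl fun ρ _ => Finset.sum_congr rfl fun τ _ =>
    Finset.sum_congr rfl fun σ _ => ?_
  simp only [mink_eq2, mul_ite, ite_mul, mul_zero, zero_mul, Finset.sum_ite_eq,
    Finset.mem_univ, if_true]
  ring

lemma belT4 (a b : Fin 4) :
    (∑ ρ, ∑ σ, ∑ τ, ∑ ρ', ∑ σ', ∑ τ',
        mink ρ ρ' * mink σ σ' * mink τ τ' * T a ρ σ τ * T b ρ' σ' τ')
      = ∑ ρ, ∑ σ, ∑ τ, eps ρ * eps σ * eps τ * (T a ρ σ τ * T b ρ σ τ) := by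
  refine Finset.sum_congr rfl fun ρ _ => Finset.sum_congr rfl fun σ _ =>
    Finset.sum_congr rfl fun τ _ => ?_
  simp only [mink_eq2, mul_ite, ite_mul, mul_zero, zero_mul, Finset.sum_ite_eq,
    Finset.mem_univ, if_true]
  ring

lemma belT5 :
    (∑ ρ, ∑ τ, ∑ σ, ∑ ν, ∑ ρ', ∑ τ', ∑ σ', ∑ ν',
        mink ρ ρ' * mink τ τ' * mink σ σ' * mink ν ν' * T ρ τ σ ν * T ρ' τ' σ' ν')
      = ∑ ρ, ∑ τ, ∑ σ, ∑ ν, eps ρ * eps τ * eps σ * eps ν * (T ρ τ σ ν * T ρ τ σ ν) := by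
  refine Finset.sum_congr rfl fun ρ _ => Finset.sum_congr rfl fun τ _ =>
    Finset.sum_congr rfl fun σ _ => Finset.sum_congr rfl fun ν _ => ?_
  simp only [mink_eq2, mul_ite, ite_mul, mul_zero, zero_mul, Finset.sum_ite_eq,
    Finset.mem_univ, if_true]
  ring

lemma Bel_collapse (a b c d : Fin 4) :
    Bel T a b c d
      = (∑ ρ, ∑ σ, eps ρ * eps σ * (T a ρ c σ * T b ρ d σ))
        + (∑ ρ, ∑ σ, eps ρ * eps σ * (T a ρ d σ * T b ρ c σ))
        - (1/2) * mink a b *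
            (∑ ρ, ∑ τ, ∑ σ, eps ρ * eps τ * eps σ * (T ρ τ c σ * T ρ τ d σ))
        - (1/2) * mink c d *
            (∑ ρ, ∑ σ, ∑ τ, eps ρ * eps σ * eps τ * (T a ρ σ τ * T b ρ σ τ))
        + (1/8) * mink a b * mink c d *
            (∑ ρ, ∑ τ, ∑ σ, ∑ ν, eps ρ * eps τ * eps σ * eps ν *
              (T ρ τ σ ν * T ρ τ σ ν)) := by
  unfold Bel
  rw [belT1, belT1, belT3, belT4, belT5]

end belcol

section pdBel
variable (R : (Fin 4 → ℝ) → Fin 4 → Fin 4 → Fin 4 → Fin 4 → ℝ) (p : Fin 4 → ℝ)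

lemma pd_Bel (hd : ∀ a b c d, DifferentiableAt ℝ (fun q => R q a b c d) p)
    (ν a b c d : Fin 4) :
    pd ν (fun q => Bel (R q) a b c d) p
      = (∑ ρ, ∑ σ, eps ρ * eps σ *
            (pd ν (fun q => R q a ρ c σ) p * R p b ρ d σ
              + R p a ρ c σ * pd ν (fun q => R q b ρ d σ) p))
        + (∑ ρ, ∑ σ, eps ρ * eps σ *
            (pd ν (fun q => R q a ρ d σ) p * R p b ρ c σ
              + R p a ρ d σ * pd ν (fun q => R q b ρ c σ) p))
        - (1/2) * mink a b * (∑ ρ, ∑ τ, ∑ σ, eps ρ * eps τ * eps σ *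
            (pd ν (fun q => R q ρ τ c σ) p * R p ρ τ d σ
              + R p ρ τ c σ * pd ν (fun q => R q ρ τ d σ) p))
        - (1/2) * mink c d * (∑ ρ, ∑ σ, ∑ τ, eps ρ * eps σ * eps τ *
            (pd ν (fun q => R q a ρ σ τ) p * R p b ρ σ τ
              + R p a ρ σ τ * pd ν (fun q => R q b ρ σ τ) p))
        + (1/8) * mink a b * mink c d * (∑ ρ, ∑ τ, ∑ σ, ∑ w, eps ρ * eps τ * eps σ * eps w *
            (pd ν (fun q => R q ρ τ σ w) p * R p ρ τ σ w
              + R p ρ τ σ w * pd ν (fun q => R q ρ τ σ w) p)) := by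
  rw [pd_congr (fun q => Bel_collapse (R q) a b c d)]
  have h1 : DifferentiableAt ℝ
      (fun q => ∑ ρ, ∑ σ, eps ρ * eps σ * (R q a ρ c σ * R q b ρ d σ)) p :=
    diff_sum_mul2 (fun i j => eps i * eps j) (fun i j q => R q a i c j)
      (fun i j q => R q b i d j) (fun i j => hd a i c j) (fun i j => hd b i d j)
  have h2 : DifferentiableAt ℝ
      (fun q => ∑ ρ, ∑ σ, eps ρ * eps σ * (R q a ρ d σ * R q b ρ c σ)) p :=
    diff_sum_mul2 (fun i j => eps i * eps j) (fun i j q => R q a i d j)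
      (fun i j q => R q b i c j) (fun i j => hd a i d j) (fun i j => hd b i c j)
  have h3 : DifferentiableAt ℝ
      (fun q => ∑ ρ, ∑ τ, ∑ σ, eps ρ * eps τ * eps σ * (R q ρ τ c σ * R q ρ τ d σ)) p :=
    diff_sum_mul3 (fun i j k => eps i * eps j * eps k) (fun i j k q => R q i j c k)
      (fun i j k q => R q i j d k) (fun i j k => hd i j c k) (fun i j k => hd i j d k)
  have h4 : DifferentiableAt ℝ
      (fun q => ∑ ρ, ∑ σ, ∑ τ, eps ρ * eps σ * eps τ * (R q a ρ σ τ * R q b ρ σ τ)) p :=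
    diff_sum_mul3 (fun i j k => eps i * eps j * eps k) (fun i j k q => R q a i j k)
      (fun i j k q => R q b i j k) (fun i j k => hd a i j k) (fun i j k => hd b i j k)
  have h5 : DifferentiableAt ℝ
      (fun q => ∑ ρ, ∑ τ, ∑ σ, ∑ w, eps ρ * eps τ * eps σ * eps w *
        (R q ρ τ σ w * R q ρ τ σ w)) p :=
    diff_sum_mul4 (fun i j k l => eps i * eps j * eps k * eps l)
      (fun i j k l q => R q i j k l) (fun i j k l q => R q i j k l)
      (fun i j k l => hd i j k l) (fun i j k l => hd i j k l)
  rw [pd_add ((((h1.fun_add h2).fun_sub (h3.const_mul ((1/2) * mink a b))).fun_sub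
        (h4.const_mul ((1/2) * mink c d)))) (h5.const_mul ((1/8) * mink a b * mink c d)),
      pd_sub ((h1.fun_add h2).fun_sub (h3.const_mul ((1/2) * mink a b)))
        (h4.const_mul ((1/2) * mink c d)),
      pd_sub (h1.fun_add h2) (h3.const_mul ((1/2) * mink a b)),
      pd_add h1 h2,
      pd_const_mul ((1/2) * mink a b) h3,
      pd_const_mul ((1/2) * mink c d) h4,
      pd_const_mul ((1/8) * mink a b * mink c d) h5,
      pd_sum_mul2 (fun i j => eps i * eps j) (fun i j q => R q a i c j)
        (fun i j q => R q b i d j) (fun i j => hd a i c j) (fun i j => hd b i d j),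
      pd_sum_mul2 (fun i j => eps i * eps j) (fun i j q => R q a i d j)
        (fun i j q => R q b i c j) (fun i j => hd a i d j) (fun i j => hd b i c j),
      pd_sum_mul3 (fun i j k => eps i * eps j * eps k) (fun i j k q => R q i j c k)
        (fun i j k q => R q i j d k) (fun i j k => hd i j c k) (fun i j k => hd i j d k),
      pd_sum_mul3 (fun i j k => eps i * eps j * eps k) (fun i j k q => R q a i j k)
        (fun i j k q => R q b i j k) (fun i j k => hd a i j k) (fun i j k => hd b i j k),
      pd_sum_mul4 (fun i j k l => eps i * eps j * eps k * eps l)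
        (fun i j k l q => R q i j k l) (fun i j k l q => R q i j k l)
        (fun i j k l => hd i j k l) (fun i j k l => hd i j k l)]

end pdBel

section collapses
variable (R : (Fin 4 → ℝ) → Fin 4 → Fin 4 → Fin 4 → Fin 4 → ℝ) (p q : Fin 4 → ℝ)

lemma belUp_collapse (α β lam μ : Fin 4) :
    belUp R q α β lam μ
      = eps α * eps β * eps lam * eps μ * Bel (R q) α β lam μ := by
  unfold belUp
  simp only [mink_eq2, mul_ite, ite_mul, mul_zero, zero_mul, Finset.sum_ite_eq,
    Finset.mem_univ, if_true]

lemma ricci_collapse (b c : Fin 4) :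
    ricci R q b c = ∑ a, eps a * R q a b a c := by
  unfold ricci
  simp only [mink_eq2, mul_ite, ite_mul, mul_zero, zero_mul, Finset.sum_ite_eq,
    Finset.mem_univ, if_true]

lemma matJUp_collapse (μ σ ρ : Fin 4) :
    matJUp R p μ σ ρ = eps μ * eps σ * eps ρ * matJ R p μ σ ρ := by
  unfold matJUp
  simp only [mink_eq2, mul_ite, ite_mul, mul_zero, zero_mul, Finset.sum_ite_eq,
    Finset.mem_univ, if_true]

lemma rUp13_collapse (β ρ lam σ : Fin 4) :
    rUp13 R q β ρ lam σ = eps β * eps lam * R q β ρ lam σ := by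
  unfold rUp13
  simp only [mink_eq2, mul_ite, ite_mul, mul_zero, zero_mul, Finset.sum_ite_eq,
    Finset.mem_univ, if_true]

lemma rUp1_collapse (β ρ σ γ : Fin 4) :
    rUp1 R q β ρ σ γ = eps β * R q β ρ σ γ := by
  unfold rUp1
  simp only [mink_eq2, ite_mul, zero_mul, Finset.sum_ite_eq, Finset.mem_univ, if_true]

lemma pd_ricci (hd : ∀ a b c d, DifferentiableAt ℝ (fun q => R q a b c d) p)
    (e b c : Fin 4) :
    pd e (fun q => ricci R q b c) p = ∑ a, eps a * pd e (fun q => R q a b a c) p := by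
  rw [pd_congr (fun q => ricci_collapse R q b c)]
  exact pd_sum_cmul1 eps (fun a q => R q a b a c) (fun a => hd a b a c)

lemma diff_Bel (hd : ∀ a b c d, DifferentiableAt ℝ (fun q => R q a b c d) p)
    (a b c d : Fin 4) :
    DifferentiableAt ℝ (fun q => Bel (R q) a b c d) p := by
  have : (fun q => Bel (R q) a b c d) = (fun q =>
      (∑ ρ, ∑ σ, eps ρ * eps σ * (R q a ρ c σ * R q b ρ d σ))
        + (∑ ρ, ∑ σ, eps ρ * eps σ * (R q a ρ d σ * R q b ρ c σ))
        - (1/2) * mink a b *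
            (∑ ρ, ∑ τ, ∑ σ, eps ρ * eps τ * eps σ * (R q ρ τ c σ * R q ρ τ d σ))
        - (1/2) * mink c d *
            (∑ ρ, ∑ σ, ∑ τ, eps ρ * eps σ * eps τ * (R q a ρ σ τ * R q b ρ σ τ))
        + (1/8) * mink a b * mink c d *
            (∑ ρ, ∑ τ, ∑ σ, ∑ ν, eps ρ * eps τ * eps σ * eps ν *
              (R q ρ τ σ ν * R q ρ τ σ ν))) := funext fun q => Bel_collapse (R q) a b c d
  rw [this]
  exact (((((diff_sum_mul2 (fun i j => eps i * eps j) (fun i j q => R q a i c j)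
      (fun i j q => R q b i d j) (fun i j => hd a i c j) (fun i j => hd b i d j)).add
    (diff_sum_mul2 (fun i j => eps i * eps j) (fun i j q => R q a i d j)
      (fun i j q => R q b i c j) (fun i j => hd a i d j) (fun i j => hd b i c j))).sub
    ((diff_sum_mul3 (fun i j k => eps i * eps j * eps k) (fun i j k q => R q i j c k)
      (fun i j k q => R q i j d k) (fun i j k => hd i j c k)
      (fun i j k => hd i j d k)).const_mul ((1/2) * mink a b))).sub
    ((diff_sum_mul3 (fun i j k => eps i * eps j * eps k) (fun i j k q => R q a i j k)
      (fun i j k q => R q b i j k) (fun i j k => hd a i j k)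
      (fun i j k => hd b i j k)).const_mul ((1/2) * mink c d))).add
    ((diff_sum_mul4 (fun i j k l => eps i * eps j * eps k * eps l)
      (fun i j k l q => R q i j k l) (fun i j k l q => R q i j k l)
      (fun i j k l => hd i j k l) (fun i j k l => hd i j k l)).const_mul
        ((1/8) * mink a b * mink c d)))

lemma divBel_eq (hd : ∀ a b c d, DifferentiableAt ℝ (fun q => R q a b c d) p)
    (β lam μ : Fin 4) :
    divBel R p β lam μ
      = ∑ α, eps α * eps β * eps lam * eps μ *
          pd α (fun q => Bel (R q) α β lam μ) p := by
  unfold divBel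
  refine Finset.sum_congr rfl fun α _ => ?_
  rw [pd_congr (fun q => belUp_collapse R q α β lam μ)]
  exact pd_const_mul (eps α * eps β * eps lam * eps μ) (diff_Bel R p hd α β lam μ)

end collapses

section alg
variable (D : Fin 4 → Fin 4 → Fin 4 → Fin 4 → Fin 4 → ℝ)

def Qc (e a b : Fin 4) : ℝ := ∑ c, eps c * D e c a c b
def Jc (e f b : Fin 4) : ℝ := Qc D e f b - Qc D f e b

variable (V : Fin 4 → Fin 4 → Fin 4 → Fin 4 → ℝ)
variable (hV1 : ∀ a b c d, V a b c d = - V b a c d)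
variable (hD1 : ∀ e a b c d, D e a b c d = - D e b a c d)
variable (hD2 : ∀ e a b c d, D e a b c d = - D e a b d c)
variable (hD3 : ∀ e a b c d, D e a b c d = D e c d a b)
variable (hB : ∀ e a b c d, D e a b c d + D a b e c d + D b e a c d = 0)

include hD3 in
lemma Qc_symm (e a b : Fin 4) : Qc D e a b = Qc D e b a := by
  unfold Qc
  exact Finset.sum_congr rfl fun c _ => by rw [hD3 e c a c b]

include hD2 hD3 hB in
lemma contracted (ρ lam σ : Fin 4) :
    ∑ α, eps α * D α α ρ lam σ = Jc D lam σ ρ := by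
  have hpt : ∀ α, D α α ρ lam σ = D lam α ρ α σ - D σ α lam α ρ := by
    intro α
    have hb := hB α lam σ α ρ
    have e1 : D α α ρ lam σ = D α lam σ α ρ := hD3 α α ρ lam σ
    have e2 : D lam σ α α ρ = - D lam α ρ α σ := by
      rw [hD3 lam σ α α ρ, hD2 lam α ρ σ α]
    linarith
  calc ∑ α, eps α * D α α ρ lam σ
      = ∑ α, (eps α * D lam α ρ α σ - eps α * D σ α lam α ρ) := by
        refine Finset.sum_congr rfl fun α _ => ?_; rw [hpt α]; ring
    _ = Qc D lam ρ σ - Qc D σ lam ρ := by rw [Finset.sum_sub_distrib]; rfl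
    _ = Jc D lam σ ρ := by rw [Qc_symm D hD3]; rfl

include hD2 hD3 hB in
lemma pieceC (β c d : Fin 4) :
    (∑ α, ∑ ρ, ∑ σ, eps α * eps ρ * eps σ * (D α α ρ c σ * V β ρ d σ))
      = ∑ ρ, ∑ σ, eps ρ * eps σ * (V β ρ d σ * Jc D c σ ρ) := by
  rw [Finset.sum_comm]
  refine Finset.sum_congr rfl fun ρ _ => ?_
  rw [Finset.sum_comm]
  refine Finset.sum_congr rfl fun σ _ => ?_
  calc ∑ α, eps α * eps ρ * eps σ * (D α α ρ c σ * V β ρ d σ)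
      = (∑ α, eps α * D α α ρ c σ) * (eps ρ * eps σ * V β ρ d σ) := by
        rw [Finset.sum_mul]; exact Finset.sum_congr rfl fun α _ => by ring
    _ = _ := by rw [contracted D hD2 hD3 hB ρ c σ]; ring

include hD2 hD3 hB in
lemma pieceC4 (β : Fin 4) :
    (∑ α, ∑ ρ, ∑ σ, ∑ τ, eps α * eps ρ * eps σ * eps τ * (D α α ρ σ τ * V β ρ σ τ))
      = ∑ ρ, ∑ σ, ∑ τ, eps ρ * eps σ * eps τ * (V β ρ σ τ * Jc D σ τ ρ) := by
  rw [Finset.sum_comm]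
  refine Finset.sum_congr rfl fun ρ _ => ?_
  rw [Finset.sum_comm]
  refine Finset.sum_congr rfl fun σ _ => ?_
  rw [Finset.sum_comm]
  refine Finset.sum_congr rfl fun τ _ => ?_
  calc ∑ α, eps α * eps ρ * eps σ * eps τ * (D α α ρ σ τ * V β ρ σ τ)
      = (∑ α, eps α * D α α ρ σ τ) * (eps ρ * eps σ * eps τ * V β ρ σ τ) := by
        rw [Finset.sum_mul]; exact Finset.sum_congr rfl fun α _ => by ring
    _ = _ := by rw [contracted D hD2 hD3 hB ρ σ τ]; ring

include hV1 hD1 hB in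
lemma halfB (β lam μ : Fin 4) :
    (∑ α, ∑ ρ, ∑ σ, eps α * eps ρ * eps σ * (V α ρ lam σ * D α β ρ μ σ))
      = (1/2) * ∑ ρ, ∑ τ, ∑ σ, eps ρ * eps τ * eps σ * (V ρ τ lam σ * D β ρ τ μ σ) := by
  set X := ∑ α, ∑ ρ, ∑ σ, eps α * eps ρ * eps σ * (V α ρ lam σ * D α β ρ μ σ) with hX
  set Z := ∑ ρ, ∑ τ, ∑ σ, eps ρ * eps τ * eps σ * (V ρ τ lam σ * D β ρ τ μ σ) with hZ
  set S2 := ∑ α, ∑ ρ, ∑ σ, eps α * eps ρ * eps σ * (V α ρ lam σ * D ρ α β μ σ) with hS2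
  have h1 : X = Z - S2 := by
    rw [hX, hZ, hS2, ← Finset.sum_sub_distrib]
    refine Finset.sum_congr rfl fun α _ => ?_
    rw [← Finset.sum_sub_distrib]
    refine Finset.sum_congr rfl fun ρ _ => ?_
    rw [← Finset.sum_sub_distrib]
    refine Finset.sum_congr rfl fun σ _ => ?_
    have hd : D α β ρ μ σ = D β α ρ μ σ - D ρ α β μ σ := by
      have hb := hB α β ρ μ σ
      have h1 := hD1 β ρ α μ σ
      linarith
    rw [hd]; ring
  have h2 : S2 = X := by
    rw [hS2, hX, Finset.sum_comm]
    refine Finset.sum_congr rfl fun α _ => Finset.sum_congr rfl fun ρ _ =>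
      Finset.sum_congr rfl fun σ _ => ?_
    rw [hV1 ρ α lam σ, hD1 α ρ β μ σ]
    ring
  rw [h2] at h1
  linarith

include hV1 hD1 hB in
lemma halfB4 (β : Fin 4) :
    (∑ α, ∑ ρ, ∑ σ, ∑ τ, eps α * eps ρ * eps σ * eps τ * (V α ρ σ τ * D α β ρ σ τ))
      = (1/2) * ∑ ρ, ∑ τ, ∑ σ, ∑ ν, eps ρ * eps τ * eps σ * eps ν *
          (V ρ τ σ ν * D β ρ τ σ ν) := by
  set X := ∑ α, ∑ ρ, ∑ σ, ∑ τ, eps α * eps ρ * eps σ * eps τ * (V α ρ σ τ * D α β ρ σ τ) with hX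
  set Z := ∑ ρ, ∑ τ, ∑ σ, ∑ ν, eps ρ * eps τ * eps σ * eps ν * (V ρ τ σ ν * D β ρ τ σ ν) with hZ
  set S2 := ∑ α, ∑ ρ, ∑ σ, ∑ τ, eps α * eps ρ * eps σ * eps τ * (V α ρ σ τ * D ρ α β σ τ) with hS2
  have h1 : X = Z - S2 := by
    rw [hX, hZ, hS2, ← Finset.sum_sub_distrib]
    refine Finset.sum_congr rfl fun α _ => ?_
    rw [← Finset.sum_sub_distrib]
    refine Finset.sum_congr rfl fun ρ _ => ?_
    rw [← Finset.sum_sub_distrib]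
    refine Finset.sum_congr rfl fun σ _ => ?_
    rw [← Finset.sum_sub_distrib]
    refine Finset.sum_congr rfl fun τ _ => ?_
    have hd : D α β ρ σ τ = D β α ρ σ τ - D ρ α β σ τ := by
      have hb := hB α β ρ σ τ
      have h1 := hD1 β ρ α σ τ
      linarith
    rw [hd]; ring
  have h2 : S2 = X := by
    rw [hS2, hX, Finset.sum_comm]
    refine Finset.sum_congr rfl fun α _ => Finset.sum_congr rfl fun ρ _ =>
      Finset.sum_congr rfl fun σ _ => Finset.sum_congr rfl fun τ _ => ?_
    rw [hV1 ρ α σ τ, hD1 α ρ β σ τ]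
    ring
  rw [h2] at h1
  linarith

lemma sum_eps_mink (β : Fin 4) (c : ℝ) (f : Fin 4 → ℝ) :
    ∑ α, eps α * (c * mink α β * f α) = c * f β := by
  rw [show ∑ α, eps α * (c * mink α β * f α)
      = ∑ α, (if α = β then eps α * (c * eps α * f α) else 0) from
    Finset.sum_congr rfl fun α _ => by rw [mink_eq2]; split <;> ring]
  rw [Finset.sum_ite_eq' Finset.univ β fun α => eps α * (c * eps α * f α)]
  simp only [Finset.mem_univ, if_true]
  linear_combination c * f β * eps_sq β

end alg

section key
variable (D : Fin 4 → Fin 4 → Fin 4 → Fin 4 → Fin 4 → ℝ)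
variable (V : Fin 4 → Fin 4 → Fin 4 → Fin 4 → ℝ)
variable (hV1 : ∀ a b c d, V a b c d = - V b a c d)
variable (hD1 : ∀ e a b c d, D e a b c d = - D e b a c d)
variable (hD2 : ∀ e a b c d, D e a b c d = - D e a b d c)
variable (hD3 : ∀ e a b c d, D e a b c d = D e c d a b)
variable (hB : ∀ e a b c d, D e a b c d + D a b e c d + D b e a c d = 0)

include hV1 hD1 hD2 hD3 hB in
lemma key (β lam μ : Fin 4) :
    (∑ α, eps α * eps β * eps lam * eps μ *
        ((∑ ρ, ∑ σ, eps ρ * eps σ *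
            (D α α ρ lam σ * V β ρ μ σ + V α ρ lam σ * D α β ρ μ σ))
          + (∑ ρ, ∑ σ, eps ρ * eps σ *
              (D α α ρ μ σ * V β ρ lam σ + V α ρ μ σ * D α β ρ lam σ))
          - (1/2) * mink α β * (∑ ρ, ∑ τ, ∑ σ, eps ρ * eps τ * eps σ *
              (D α ρ τ lam σ * V ρ τ μ σ + V ρ τ lam σ * D α ρ τ μ σ))
          - (1/2) * mink lam μ * (∑ ρ, ∑ σ, ∑ τ, eps ρ * eps σ * eps τ *
              (D α α ρ σ τ * V β ρ σ τ + V α ρ σ τ * D α β ρ σ τ))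
          + (1/8) * mink α β * mink lam μ * (∑ ρ, ∑ τ, ∑ σ, ∑ w,
              eps ρ * eps τ * eps σ * eps w *
              (D α ρ τ σ w * V ρ τ σ w + V ρ τ σ w * D α ρ τ σ w))))
      = eps β * eps lam * eps μ *
          ((∑ ρ, ∑ σ, eps ρ * eps σ * (V β ρ lam σ * Jc D μ σ ρ))
            + (∑ ρ, ∑ σ, eps ρ * eps σ * (V β ρ μ σ * Jc D lam σ ρ))
            - (1/2) * mink lam μ * (∑ ρ, ∑ σ, ∑ γ, eps ρ * eps σ * eps γ *
                (V β ρ σ γ * Jc D σ γ ρ))) := by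
  have hu1 : ∑ α, eps α * (∑ ρ, ∑ σ, eps ρ * eps σ *
        (D α α ρ lam σ * V β ρ μ σ + V α ρ lam σ * D α β ρ μ σ))
      = (∑ ρ, ∑ σ, eps ρ * eps σ * (V β ρ μ σ * Jc D lam σ ρ))
        + (1/2) * ∑ ρ, ∑ τ, ∑ σ, eps ρ * eps τ * eps σ *
            (V ρ τ lam σ * D β ρ τ μ σ) := by
    calc ∑ α, eps α * (∑ ρ, ∑ σ, eps ρ * eps σ *
          (D α α ρ lam σ * V β ρ μ σ + V α ρ lam σ * D α β ρ μ σ))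
        = ∑ α, ∑ ρ, ∑ σ, (eps α * eps ρ * eps σ * (D α α ρ lam σ * V β ρ μ σ)
            + eps α * eps ρ * eps σ * (V α ρ lam σ * D α β ρ μ σ)) := by
          refine Finset.sum_congr rfl fun α _ => ?_
          rw [Finset.mul_sum]
          refine Finset.sum_congr rfl fun ρ _ => ?_
          rw [Finset.mul_sum]
          exact Finset.sum_congr rfl fun σ _ => by ring
      _ = (∑ α, ∑ ρ, ∑ σ, eps α * eps ρ * eps σ * (D α α ρ lam σ * V β ρ μ σ))
          + ∑ α, ∑ ρ, ∑ σ, eps α * eps ρ * eps σ * (V α ρ lam σ * D α β ρ μ σ) := by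
          simp only [Finset.sum_add_distrib]
      _ = _ := by
          rw [pieceC D V hD2 hD3 hB β lam μ, halfB D V hV1 hD1 hB β lam μ]
  have hu2 : ∑ α, eps α * (∑ ρ, ∑ σ, eps ρ * eps σ *
        (D α α ρ μ σ * V β ρ lam σ + V α ρ μ σ * D α β ρ lam σ))
      = (∑ ρ, ∑ σ, eps ρ * eps σ * (V β ρ lam σ * Jc D μ σ ρ))
        + (1/2) * ∑ ρ, ∑ τ, ∑ σ, eps ρ * eps τ * eps σ *
            (V ρ τ μ σ * D β ρ τ lam σ) := by
    calc ∑ α, eps α * (∑ ρ, ∑ σ, eps ρ * eps σ *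
          (D α α ρ μ σ * V β ρ lam σ + V α ρ μ σ * D α β ρ lam σ))
        = ∑ α, ∑ ρ, ∑ σ, (eps α * eps ρ * eps σ * (D α α ρ μ σ * V β ρ lam σ)
            + eps α * eps ρ * eps σ * (V α ρ μ σ * D α β ρ lam σ)) := by
          refine Finset.sum_congr rfl fun α _ => ?_
          rw [Finset.mul_sum]
          refine Finset.sum_congr rfl fun ρ _ => ?_
          rw [Finset.mul_sum]
          exact Finset.sum_congr rfl fun σ _ => by ring
      _ = (∑ α, ∑ ρ, ∑ σ, eps α * eps ρ * eps σ * (D α α ρ μ σ * V β ρ lam σ))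
          + ∑ α, ∑ ρ, ∑ σ, eps α * eps ρ * eps σ * (V α ρ μ σ * D α β ρ lam σ) := by
          simp only [Finset.sum_add_distrib]
      _ = _ := by
          rw [pieceC D V hD2 hD3 hB β μ lam, halfB D V hV1 hD1 hB β μ lam]
  have hu3 : ∑ α, eps α * ((1/2) * mink α β * (∑ ρ, ∑ τ, ∑ σ,
        eps ρ * eps τ * eps σ *
        (D α ρ τ lam σ * V ρ τ μ σ + V ρ τ lam σ * D α ρ τ μ σ)))
      = (1/2) * ((∑ ρ, ∑ τ, ∑ σ, eps ρ * eps τ * eps σ *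
            (V ρ τ μ σ * D β ρ τ lam σ))
          + ∑ ρ, ∑ τ, ∑ σ, eps ρ * eps τ * eps σ *
            (V ρ τ lam σ * D β ρ τ μ σ)) := by
    rw [sum_eps_mink β (1/2) (fun α => ∑ ρ, ∑ τ, ∑ σ, eps ρ * eps τ * eps σ *
        (D α ρ τ lam σ * V ρ τ μ σ + V ρ τ lam σ * D α ρ τ μ σ))]
    congr 1
    calc (∑ ρ, ∑ τ, ∑ σ, eps ρ * eps τ * eps σ *
          (D β ρ τ lam σ * V ρ τ μ σ + V ρ τ lam σ * D β ρ τ μ σ))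
        = ∑ ρ, ∑ τ, ∑ σ, (eps ρ * eps τ * eps σ * (V ρ τ μ σ * D β ρ τ lam σ)
            + eps ρ * eps τ * eps σ * (V ρ τ lam σ * D β ρ τ μ σ)) := by
          refine Finset.sum_congr rfl fun ρ _ => Finset.sum_congr rfl fun τ _ =>
            Finset.sum_congr rfl fun σ _ => by ring
      _ = _ := by simp only [Finset.sum_add_distrib]
  have hu4 : ∑ α, eps α * ((1/2) * mink lam μ * (∑ ρ, ∑ σ, ∑ τ,
        eps ρ * eps σ * eps τ *
        (D α α ρ σ τ * V β ρ σ τ + V α ρ σ τ * D α β ρ σ τ)))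
      = (1/2) * mink lam μ * ((∑ ρ, ∑ σ, ∑ τ, eps ρ * eps σ * eps τ *
            (V β ρ σ τ * Jc D σ τ ρ))
          + (1/2) * ∑ ρ, ∑ τ, ∑ σ, ∑ ν, eps ρ * eps τ * eps σ * eps ν *
              (V ρ τ σ ν * D β ρ τ σ ν)) := by
    calc ∑ α, eps α * ((1/2) * mink lam μ * (∑ ρ, ∑ σ, ∑ τ,
          eps ρ * eps σ * eps τ *
          (D α α ρ σ τ * V β ρ σ τ + V α ρ σ τ * D α β ρ σ τ)))
        = ∑ α, ((1/2) * mink lam μ) * (eps α * (∑ ρ, ∑ σ, ∑ τ,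
            eps ρ * eps σ * eps τ *
            (D α α ρ σ τ * V β ρ σ τ + V α ρ σ τ * D α β ρ σ τ))) := by
          exact Finset.sum_congr rfl fun α _ => by ring
      _ = ((1/2) * mink lam μ) * ∑ α, eps α * (∑ ρ, ∑ σ, ∑ τ,
            eps ρ * eps σ * eps τ *
            (D α α ρ σ τ * V β ρ σ τ + V α ρ σ τ * D α β ρ σ τ)) := by
          rw [Finset.mul_sum]
      _ = _ := by
          congr 1
          calc ∑ α, eps α * (∑ ρ, ∑ σ, ∑ τ, eps ρ * eps σ * eps τ *
                (D α α ρ σ τ * V β ρ σ τ + V α ρ σ τ * D α β ρ σ τ))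
              = ∑ α, ∑ ρ, ∑ σ, ∑ τ,
                  (eps α * eps ρ * eps σ * eps τ * (D α α ρ σ τ * V β ρ σ τ)
                    + eps α * eps ρ * eps σ * eps τ * (V α ρ σ τ * D α β ρ σ τ)) := by
                refine Finset.sum_congr rfl fun α _ => ?_
                rw [Finset.mul_sum]
                refine Finset.sum_congr rfl fun ρ _ => ?_
                rw [Finset.mul_sum]
                refine Finset.sum_congr rfl fun σ _ => ?_
                rw [Finset.mul_sum]
                exact Finset.sum_congr rfl fun τ _ => by ring
            _ = (∑ α, ∑ ρ, ∑ σ, ∑ τ,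
                  eps α * eps ρ * eps σ * eps τ * (D α α ρ σ τ * V β ρ σ τ))
                + ∑ α, ∑ ρ, ∑ σ, ∑ τ,
                    eps α * eps ρ * eps σ * eps τ * (V α ρ σ τ * D α β ρ σ τ) := by
                simp only [Finset.sum_add_distrib]
            _ = _ := by
                rw [pieceC4 D V hD2 hD3 hB β, halfB4 D V hV1 hD1 hB β]
  have hu5 : ∑ α, eps α * ((1/8) * mink α β * mink lam μ * (∑ ρ, ∑ τ, ∑ σ, ∑ w,
        eps ρ * eps τ * eps σ * eps w *
        (D α ρ τ σ w * V ρ τ σ w + V ρ τ σ w * D α ρ τ σ w)))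
      = (1/8) * mink lam μ * ((∑ ρ, ∑ τ, ∑ σ, ∑ ν, eps ρ * eps τ * eps σ * eps ν *
            (V ρ τ σ ν * D β ρ τ σ ν))
          + ∑ ρ, ∑ τ, ∑ σ, ∑ ν, eps ρ * eps τ * eps σ * eps ν *
            (V ρ τ σ ν * D β ρ τ σ ν)) := by
    calc ∑ α, eps α * ((1/8) * mink α β * mink lam μ * (∑ ρ, ∑ τ, ∑ σ, ∑ w,
          eps ρ * eps τ * eps σ * eps w *
          (D α ρ τ σ w * V ρ τ σ w + V ρ τ σ w * D α ρ τ σ w)))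
        = ∑ α, eps α * (((1/8) * mink lam μ) * mink α β * (∑ ρ, ∑ τ, ∑ σ, ∑ w,
            eps ρ * eps τ * eps σ * eps w *
            (D α ρ τ σ w * V ρ τ σ w + V ρ τ σ w * D α ρ τ σ w))) := by
          exact Finset.sum_congr rfl fun α _ => by ring
      _ = ((1/8) * mink lam μ) * (∑ ρ, ∑ τ, ∑ σ, ∑ w,
            eps ρ * eps τ * eps σ * eps w *
            (D β ρ τ σ w * V ρ τ σ w + V ρ τ σ w * D β ρ τ σ w)) := by
          rw [sum_eps_mink β ((1/8) * mink lam μ) (fun α => ∑ ρ, ∑ τ, ∑ σ, ∑ w,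
            eps ρ * eps τ * eps σ * eps w *
            (D α ρ τ σ w * V ρ τ σ w + V ρ τ σ w * D α ρ τ σ w))]
      _ = _ := by
          rw [mul_assoc, mul_assoc]
          congr 1
          congr 1
          calc (∑ ρ, ∑ τ, ∑ σ, ∑ w, eps ρ * eps τ * eps σ * eps w *
                (D β ρ τ σ w * V ρ τ σ w + V ρ τ σ w * D β ρ τ σ w))
              = ∑ ρ, ∑ τ, ∑ σ, ∑ w,
                  (eps ρ * eps τ * eps σ * eps w * (V ρ τ σ w * D β ρ τ σ w)
                    + eps ρ * eps τ * eps σ * eps w * (V ρ τ σ w * D β ρ τ σ w)) := by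
                refine Finset.sum_congr rfl fun ρ _ => Finset.sum_congr rfl fun τ _ =>
                  Finset.sum_congr rfl fun σ _ => Finset.sum_congr rfl fun w _ => by ring
            _ = _ := by simp only [Finset.sum_add_distrib]
  calc (∑ α, eps α * eps β * eps lam * eps μ *
        ((∑ ρ, ∑ σ, eps ρ * eps σ *
            (D α α ρ lam σ * V β ρ μ σ + V α ρ lam σ * D α β ρ μ σ))
          + (∑ ρ, ∑ σ, eps ρ * eps σ *
              (D α α ρ μ σ * V β ρ lam σ + V α ρ μ σ * D α β ρ lam σ))
          - (1/2) * mink α β * (∑ ρ, ∑ τ, ∑ σ, eps ρ * eps τ * eps σ *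
              (D α ρ τ lam σ * V ρ τ μ σ + V ρ τ lam σ * D α ρ τ μ σ))
          - (1/2) * mink lam μ * (∑ ρ, ∑ σ, ∑ τ, eps ρ * eps σ * eps τ *
              (D α α ρ σ τ * V β ρ σ τ + V α ρ σ τ * D α β ρ σ τ))
          + (1/8) * mink α β * mink lam μ * (∑ ρ, ∑ τ, ∑ σ, ∑ w,
              eps ρ * eps τ * eps σ * eps w *
              (D α ρ τ σ w * V ρ τ σ w + V ρ τ σ w * D α ρ τ σ w))))
      = ∑ α, (eps β * eps lam * eps μ) *
          ((eps α * (∑ ρ, ∑ σ, eps ρ * eps σ *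
              (D α α ρ lam σ * V β ρ μ σ + V α ρ lam σ * D α β ρ μ σ)))
            + (eps α * (∑ ρ, ∑ σ, eps ρ * eps σ *
                (D α α ρ μ σ * V β ρ lam σ + V α ρ μ σ * D α β ρ lam σ)))
            - (eps α * ((1/2) * mink α β * (∑ ρ, ∑ τ, ∑ σ, eps ρ * eps τ * eps σ *
                (D α ρ τ lam σ * V ρ τ μ σ + V ρ τ lam σ * D α ρ τ μ σ))))
            - (eps α * ((1/2) * mink lam μ * (∑ ρ, ∑ σ, ∑ τ, eps ρ * eps σ * eps τ *
                (D α α ρ σ τ * V β ρ σ τ + V α ρ σ τ * D α β ρ σ τ))))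
            + (eps α * ((1/8) * mink α β * mink lam μ * (∑ ρ, ∑ τ, ∑ σ, ∑ w,
                eps ρ * eps τ * eps σ * eps w *
                (D α ρ τ σ w * V ρ τ σ w + V ρ τ σ w * D α ρ τ σ w))))) := by
        exact Finset.sum_congr rfl fun α _ => by ring
    _ = (eps β * eps lam * eps μ) * ∑ α,
          ((eps α * (∑ ρ, ∑ σ, eps ρ * eps σ *
              (D α α ρ lam σ * V β ρ μ σ + V α ρ lam σ * D α β ρ μ σ)))
            + (eps α * (∑ ρ, ∑ σ, eps ρ * eps σ *
                (D α α ρ μ σ * V β ρ lam σ + V α ρ μ σ * D α β ρ lam σ)))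
            - (eps α * ((1/2) * mink α β * (∑ ρ, ∑ τ, ∑ σ, eps ρ * eps τ * eps σ *
                (D α ρ τ lam σ * V ρ τ μ σ + V ρ τ lam σ * D α ρ τ μ σ))))
            - (eps α * ((1/2) * mink lam μ * (∑ ρ, ∑ σ, ∑ τ, eps ρ * eps σ * eps τ *
                (D α α ρ σ τ * V β ρ σ τ + V α ρ σ τ * D α β ρ σ τ))))
            + (eps α * ((1/8) * mink α β * mink lam μ * (∑ ρ, ∑ τ, ∑ σ, ∑ w,
                eps ρ * eps τ * eps σ * eps w *
                (D α ρ τ σ w * V ρ τ σ w + V ρ τ σ w * D α ρ τ σ w))))) := by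
        rw [Finset.mul_sum]
    _ = _ := by
        simp only [Finset.sum_add_distrib, Finset.sum_sub_distrib]
        rw [hu1, hu2, hu3, hu4, hu5]
        ring

end key

lemma mink_eps (a b : Fin 4) : eps a * eps b * mink a b = mink a b := by
  by_cases h : a = b
  · subst h
    rw [show mink a a = eps a from by rw [mink_eq2]; simp]
    linear_combination eps a * eps_sq a
  · simp [mink_eq2, h]

/-- on Minkowski ℝ⁴, for a smooth (0,4)-tensor field `R` with the
Riemann symmetries satisfying the second Bianchi identity, the divergence of
its Bel tensor is
`∂_α B^{αβλμ} = R^β{}_ρ{}^λ{}_σ J^{μσρ} + R^β{}_ρ{}^μ{}_σ J^{λσρ}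
  − (1/2) η^{λμ} R^β{}_{ρσγ} J^{σγρ}`,
where `J_{λμβ} = ∂_λ Ric_{μβ} − ∂_μ Ric_{λβ}` and `Ric_{μβ} = η^{αλ} R_{αμλβ}`. -/
theorem divergence_of_bel_tensor
    (R : (Fin 4 → ℝ) → Fin 4 → Fin 4 → Fin 4 → Fin 4 → ℝ)
    (hRsmooth : ∀ α β lam μ, ContDiff ℝ (⊤ : ℕ∞) fun p => R p α β lam μ)
    (hRsym : ∀ p, RiemannSym (R p))
    (hBianchi : SecondBianchi R) :
    ∀ p β lam μ, divBel R p β lam μ =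
        (∑ ρ, ∑ σ, rUp13 R p β ρ lam σ * matJUp R p μ σ ρ)
      + (∑ ρ, ∑ σ, rUp13 R p β ρ μ σ * matJUp R p lam σ ρ)
      - (1/2) * mink lam μ * (∑ ρ, ∑ σ, ∑ γ, rUp1 R p β ρ σ γ * matJUp R p σ γ ρ) := by

  intro p β lam μ
  have hd : ∀ a b c d, DifferentiableAt ℝ (fun q => R q a b c d) p := fun a b c d =>
    ((hRsmooth a b c d).differentiable (by simp)).differentiableAt
  have hV1 : ∀ a b c d, R p a b c d = - R p b a c d := (hRsym p).1
  have hD1 : ∀ e a b c d, pd e (fun q => R q a b c d) p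
      = - pd e (fun q => R q b a c d) p := by
    intro e a b c d
    rw [pd_congr (fun q => (hRsym q).1 a b c d)]
    exact pd_neg
  have hD2 : ∀ e a b c d, pd e (fun q => R q a b c d) p
      = - pd e (fun q => R q a b d c) p := by
    intro e a b c d
    rw [pd_congr (fun q => (hRsym q).2.1 a b c d)]
    exact pd_neg
  have hD3 : ∀ e a b c d, pd e (fun q => R q a b c d) p
      = pd e (fun q => R q c d a b) p := by
    intro e a b c d
    exact pd_congr (fun q => (hRsym q).2.2.1 a b c d)
  have hB : ∀ e a b c d, pd e (fun q => R q a b c d) p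
      + pd a (fun q => R q b e c d) p + pd b (fun q => R q e a c d) p = 0 := by
    intro e a b c d
    have h6 := hBianchi p e a b c d
    have h1 := hD1 e b a c d
    have h2 := hD1 a e b c d
    have h3 := hD1 b a e c d
    linarith
  have keyed := key (fun e a b c d => pd e (fun q => R q a b c d) p)
    (fun a b c d => R p a b c d) hV1 hD1 hD2 hD3 hB β lam μ
  have hmatJ : ∀ a b c, matJ R p a b c
      = Jc (fun e a b c d => pd e (fun q => R q a b c d) p) a b c := by
    intro a b c
    unfold matJ Jc Qc
    rw [pd_ricci R p hd, pd_ricci R p hd]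
  have hA : (∑ ρ, ∑ σ, rUp13 R p β ρ lam σ * matJUp R p μ σ ρ)
      = (eps β * eps lam * eps μ) * ∑ ρ, ∑ σ, eps ρ * eps σ *
          (R p β ρ lam σ *
            Jc (fun e a b c d => pd e (fun q => R q a b c d) p) μ σ ρ) := by
    calc (∑ ρ, ∑ σ, rUp13 R p β ρ lam σ * matJUp R p μ σ ρ)
        = ∑ ρ, ∑ σ, (eps β * eps lam * eps μ) * (eps ρ * eps σ *
            (R p β ρ lam σ *
              Jc (fun e a b c d => pd e (fun q => R q a b c d) p) μ σ ρ)) := by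
          refine Finset.sum_congr rfl fun ρ _ => Finset.sum_congr rfl fun σ _ => ?_
          rw [rUp13_collapse, matJUp_collapse, hmatJ]; ring
      _ = _ := by simp only [← Finset.mul_sum]
  have hA2 : (∑ ρ, ∑ σ, rUp13 R p β ρ μ σ * matJUp R p lam σ ρ)
      = (eps β * eps lam * eps μ) * ∑ ρ, ∑ σ, eps ρ * eps σ *
          (R p β ρ μ σ *
            Jc (fun e a b c d => pd e (fun q => R q a b c d) p) lam σ ρ) := by
    calc (∑ ρ, ∑ σ, rUp13 R p β ρ μ σ * matJUp R p lam σ ρ)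
        = ∑ ρ, ∑ σ, (eps β * eps μ * eps lam) * (eps ρ * eps σ *
            (R p β ρ μ σ *
              Jc (fun e a b c d => pd e (fun q => R q a b c d) p) lam σ ρ)) := by
          refine Finset.sum_congr rfl fun ρ _ => Finset.sum_congr rfl fun σ _ => ?_
          rw [rUp13_collapse, matJUp_collapse, hmatJ]; ring
      _ = _ := by simp only [← Finset.mul_sum]; ring
  have hC : (1/2) * mink lam μ * (∑ ρ, ∑ σ, ∑ γ, rUp1 R p β ρ σ γ * matJUp R p σ γ ρ)
      = (eps β * eps lam * eps μ) * ((1/2) * mink lam μ *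
          (∑ ρ, ∑ σ, ∑ γ, eps ρ * eps σ * eps γ *
            (R p β ρ σ γ *
              Jc (fun e a b c d => pd e (fun q => R q a b c d) p) σ γ ρ))) := by
    have hS : (∑ ρ, ∑ σ, ∑ γ, rUp1 R p β ρ σ γ * matJUp R p σ γ ρ)
        = eps β * (∑ ρ, ∑ σ, ∑ γ, eps ρ * eps σ * eps γ *
            (R p β ρ σ γ *
              Jc (fun e a b c d => pd e (fun q => R q a b c d) p) σ γ ρ)) := by
      calc (∑ ρ, ∑ σ, ∑ γ, rUp1 R p β ρ σ γ * matJUp R p σ γ ρ)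
          = ∑ ρ, ∑ σ, ∑ γ, eps β * (eps ρ * eps σ * eps γ *
              (R p β ρ σ γ *
                Jc (fun e a b c d => pd e (fun q => R q a b c d) p) σ γ ρ)) := by
            refine Finset.sum_congr rfl fun ρ _ => Finset.sum_congr rfl fun σ _ =>
              Finset.sum_congr rfl fun γ _ => ?_
            rw [rUp1_collapse, matJUp_collapse, hmatJ]; ring
        _ = _ := by simp only [← Finset.mul_sum]
    rw [hS]
    have hme := mink_eps lam μ
    linear_combination (-(1/2) * eps β * (∑ ρ, ∑ σ, ∑ γ, eps ρ * eps σ * eps γ *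
      (R p β ρ σ γ *
        Jc (fun e a b c d => pd e (fun q => R q a b c d) p) σ γ ρ))) * hme
  have L1 : divBel R p β lam μ = ∑ α, eps α * eps β * eps lam * eps μ *
      ((∑ ρ, ∑ σ, eps ρ * eps σ *
          (pd α (fun q => R q α ρ lam σ) p * R p β ρ μ σ
            + R p α ρ lam σ * pd α (fun q => R q β ρ μ σ) p))
        + (∑ ρ, ∑ σ, eps ρ * eps σ *
            (pd α (fun q => R q α ρ μ σ) p * R p β ρ lam σ
              + R p α ρ μ σ * pd α (fun q => R q β ρ lam σ) p))
        - (1/2) * mink α β * (∑ ρ, ∑ τ, ∑ σ, eps ρ * eps τ * eps σ *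
            (pd α (fun q => R q ρ τ lam σ) p * R p ρ τ μ σ
              + R p ρ τ lam σ * pd α (fun q => R q ρ τ μ σ) p))
        - (1/2) * mink lam μ * (∑ ρ, ∑ σ, ∑ τ, eps ρ * eps σ * eps τ *
            (pd α (fun q => R q α ρ σ τ) p * R p β ρ σ τ
              + R p α ρ σ τ * pd α (fun q => R q β ρ σ τ) p))
        + (1/8) * mink α β * mink lam μ * (∑ ρ, ∑ τ, ∑ σ, ∑ w,
            eps ρ * eps τ * eps σ * eps w *
            (pd α (fun q => R q ρ τ σ w) p * R p ρ τ σ w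
              + R p ρ τ σ w * pd α (fun q => R q ρ τ σ w) p))) := by
    rw [divBel_eq R p hd]
    exact Finset.sum_congr rfl fun α _ => by rw [pd_Bel R p hd α α β lam μ]
  rw [L1, hA, hA2, hC, ← mul_add, ← mul_sub]
  exact keyed
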